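/- Every finite group is a direct factor of some finite non-RCC group: for every finite group G there exists a finite group K such that the direct product K × G admits an automorphism without a regular cycle. In particular, every finite group embeds into a finite non-RCC group. -/

import Mathlib

/-!
If `β` is an automorphism of `K` without a regular cycle, then so is `β × id` on `K × G`: it has
the order of `β`, and the cycle of `(k, g)` has the length of the cycle of `k`.

For `K` take `ℤ/30 ⋊ V₄`, the Klein four-group acting through the units `-1` and `19` (which act
on `ℤ/3 × ℤ/5` as `(-1, -1)` and `(1, -1)`), and let `β` be the shear `(n, h) ↦ (n + d h, h)`
along a crossed homomorphism `d : V₄ → ℤ/30`. The cycle of `(n, h)` has length the order of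
`d h`, while `β` has the order of `d` in `V₄ → ℤ/30`. The nonzero values of `d` have orders
`15`, `10` and `6`, so `β` has order `30` and no cycle of length `30`.
-/

open Function

namespace MulAut

variable {M K : Type*} [Mul M] [Group K]

theorem coe_pow (α : MulAut M) (n : ℕ) : ⇑(α ^ n) = (⇑α)^[n] := by
  change ⇑(toPerm M (α ^ n)) = _
  rw [map_pow, Equiv.Perm.coe_pow]
  rfl

variable (G : Type*) [Group G]

def prodRight : MulAut K →* MulAut (K × G) where
  toFun α := α.prodCongr (MulEquiv.refl G)
  map_one' := rfl
  map_mul' _ _ := rfl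

theorem prodRight_injective : Injective (prodRight (K := K) G) := fun _ _ h =>
  MulEquiv.ext fun k => congrArg (fun e : MulAut (K × G) => (e (k, 1)).1) h

variable {G}

theorem orderOf_prodRight (α : MulAut K) : orderOf (prodRight G α) = orderOf α :=
  orderOf_injective _ (prodRight_injective G) α

theorem minimalPeriod_prodRight (α : MulAut K) (x : K × G) :
    minimalPeriod (prodRight G α) x = minimalPeriod α x.1 := by
  change minimalPeriod (Prod.map α id) x = _
  rw [minimalPeriod_prodMap, minimalPeriod_id, Nat.lcm_one_right]

end MulAut

namespace SemidirectProduct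

variable {N H : Type*} [CommGroup N] [Group H] {φ : H →* MulAut N} {d : H → N}

def shear (hd : ∀ a b, d (a * b) = d a * φ a (d b)) : MulAut (N ⋊[φ] H) where
  toFun x := ⟨x.left * d x.right, x.right⟩
  invFun x := ⟨x.left * (d x.right)⁻¹, x.right⟩
  left_inv x := by ext <;> simp
  right_inv x := by ext <;> simp
  map_mul' x y := by
    ext
    · simp only [mul_left, mul_right, hd, map_mul]
      ac_rfl
    · rfl

variable (hd : ∀ a b, d (a * b) = d a * φ a (d b))

theorem shear_apply (x : N ⋊[φ] H) : shear hd x = ⟨x.left * d x.right, x.right⟩ := rfl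

theorem shear_pow_apply (n : ℕ) (x : N ⋊[φ] H) :
    (shear hd ^ n) x = ⟨x.left * d x.right ^ n, x.right⟩ := by
  induction n with
  | zero => simp
  | succ n ih =>
    rw [pow_succ', MulAut.mul_apply, ih, shear_apply, pow_succ, mul_assoc]

theorem isPeriodicPt_shear_iff {n : ℕ} {x : N ⋊[φ] H} :
    IsPeriodicPt (shear hd) n x ↔ d x.right ^ n = 1 := by
  rw [IsPeriodicPt, IsFixedPt, ← MulAut.coe_pow, shear_pow_apply, SemidirectProduct.ext_iff]
  simp

theorem minimalPeriod_shear (x : N ⋊[φ] H) :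
    minimalPeriod (shear hd) x = orderOf (d x.right) := by
  rw [orderOf, minimalPeriod_eq_minimalPeriod_iff]
  intro n
  rw [isPeriodicPt_shear_iff, isPeriodicPt_mul_iff_pow_eq_one]

theorem shear_pow_eq_one_iff {n : ℕ} : shear hd ^ n = 1 ↔ d ^ n = 1 := by
  simp only [MulEquiv.ext_iff, funext_iff, shear_pow_apply, MulAut.one_apply,
    SemidirectProduct.ext_iff, mul_eq_left, Pi.pow_apply, Pi.one_apply, and_true]
  exact ⟨fun h a => h ⟨1, a⟩, fun h x => h x.right⟩

theorem orderOf_shear : orderOf (shear hd) = orderOf d :=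
  orderOf_eq_orderOf_iff.2 fun _ => shear_pow_eq_one_iff hd

end SemidirectProduct

namespace NonRCCExample

abbrev V₄ : Type := Multiplicative (ZMod 2 × ZMod 2)

abbrev C₃₀ : Type := Multiplicative (ZMod 30)

def unit19 : (ZMod 30)ˣ := ⟨19, 19, by decide, by decide⟩

def ψ : V₄ →* (ZMod 30)ˣ where
  toFun h := (-1) ^ h.toAdd.1.val * unit19 ^ h.toAdd.2.val
  map_one' := by decide
  map_mul' := by decide

def φ : V₄ →* MulAut C₃₀ :=
  (MulAutMultiplicative (ZMod 30)).symm.toMonoidHom.comp (AddAut.mulLeft.comp ψ)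

theorem φ_apply (h : V₄) (n : C₃₀) : φ h n = .ofAdd (ψ h * n.toAdd) := rfl

def d (h : V₄) : C₃₀ := .ofAdd (![![0, 9], ![14, 5]] h.toAdd.1 h.toAdd.2)

theorem d_mul (a b : V₄) : d (a * b) = d a * φ a (d b) := by
  rw [φ_apply]
  revert a b
  decide

theorem exists_pow_eq_one_pow_ne_one (h : V₄) :
    ∃ m ∈ ({6, 10, 15} : Finset ℕ), d h ^ m = 1 ∧ d ^ m ≠ 1 := by
  revert h
  decide

theorem orderOf_d_apply_ne (h : V₄) : orderOf (d h) ≠ orderOf d := by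
  obtain ⟨m, -, hdh, hd⟩ := exists_pow_eq_one_pow_ne_one h
  exact fun heq => hd (orderOf_dvd_iff_pow_eq_one.1 (heq ▸ orderOf_dvd_of_pow_eq_one hdh))

end NonRCCExample

theorem stmt18_general (G : Type*) [Group G] :
    ∃ (K : Type) (_ : Group K) (_ : Fintype K),
      (∃ α : MulAut (K × G), ∀ x : K × G, Function.minimalPeriod (⇑α) x ≠ orderOf α) ∧
      ∃ f : G →* K × G, Function.Injective f := by
  let β := SemidirectProduct.shear NonRCCExample.d_mul
  refine ⟨_, inferInstance, Fintype.ofEquiv _ SemidirectProduct.equivProd.symm,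
    ⟨MulAut.prodRight G β, fun x => ?_⟩, MonoidHom.inr _ G, fun _ _ h => congrArg Prod.snd h⟩
  rw [MulAut.minimalPeriod_prodRight, MulAut.orderOf_prodRight,
    SemidirectProduct.minimalPeriod_shear, SemidirectProduct.orderOf_shear]
  exact NonRCCExample.orderOf_d_apply_ne x.1.right

/-- Every finite group `G` is a direct factor of some finite non-RCC group: there is a finite
group `K` such that `K × G` has an automorphism without a regular cycle. In particular, `G`
embeds into a finite non-RCC group. -/
theorem stmt18 (G : Type*) [Group G] [Fintype G] :
    ∃ (K : Type) (_ : Group K) (_ : Fintype K),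
      (∃ α : MulAut (K × G), ∀ x : K × G, Function.minimalPeriod (⇑α) x ≠ orderOf α) ∧
      ∃ f : G →* K × G, Function.Injective f :=
  stmt18_general G
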